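/- Let K be a field of characteristic zero, n ≥ 1, and let a be a nonzero element of K. Let D be the K-derivation of K[x1,...,xn] given by D = Σ_{i=1}^{n-1} (a·x_i + x_{i+1})·∂_{x_i} + a·x_n·∂_{x_n}. Then the image of D equals the ideal of K[x1,...,xn] generated by x1, x2, ..., xn. -/
import Mathlib


open MvPolynomial

/-- The derivation `D = Σ_{i=1}^{n-1} (a x_i + x_{i+1}) ∂_i + a x_n ∂_n` of
`K[x_1, …, x_n]` (here with `n + 1` variables, `n ≥ 0`, indexed by `Fin (n+1)`),
as a `K`-linear map. -/
noncomputable def jordanDerivation {K : Type*} [Field K] (n : ℕ) (a : K) :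
    MvPolynomial (Fin (n + 1)) K →ₗ[K] MvPolynomial (Fin (n + 1)) K :=
  ∑ i : Fin (n + 1),
    (LinearMap.mulLeft K
      (if h : (i : ℕ) < n then a • X i + X ⟨(i : ℕ) + 1, by omega⟩
       else a • X i)).comp
      (pderiv i).toLinearMap

section Aux

variable {K : Type*} [Field K]

private lemma jordan_apply (n : ℕ) (a : K) (p : MvPolynomial (Fin (n + 1)) K) :
    jordanDerivation (K := K) n a p = ∑ i : Fin (n + 1),
      (if h : (i : ℕ) < n then a • X i + X ⟨(i : ℕ) + 1, by omega⟩
       else a • X i) * pderiv i p := by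
  simp [jordanDerivation, LinearMap.sum_apply]

private lemma X_mul_pd (n : ℕ) (i : Fin (n + 1)) (α : Fin (n + 1) →₀ ℕ) :
    (X i : MvPolynomial (Fin (n + 1)) K) * monomial (α - Finsupp.single i 1) ((α i : K))
      = (α i : K) • monomial α 1 := by
  rcases Nat.eq_zero_or_pos (α i) with h | h
  · simp [h]
  · have hle : Finsupp.single i 1 ≤ α := by
      rwa [Finsupp.single_le_iff]
    rw [X, monomial_mul, smul_monomial, smul_eq_mul, mul_one, one_mul,
      add_tsub_cancel_of_le hle]

private lemma X_mul_pd' (n : ℕ) (i j : Fin (n + 1)) (α : Fin (n + 1) →₀ ℕ) :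
    (X j : MvPolynomial (Fin (n + 1)) K) * monomial (α - Finsupp.single i 1) ((α i : K))
      = (α i : K) • monomial (α - Finsupp.single i 1 + Finsupp.single j 1) 1 := by
  rw [X, monomial_mul, smul_monomial, smul_eq_mul, mul_one, one_mul]
  exact congrArg (fun s => monomial s ((α i : K))) (add_comm _ _)

private lemma jordan_monomial (n : ℕ) (a : K) (α : Fin (n + 1) →₀ ℕ) :
    jordanDerivation (K := K) n a (monomial α 1)
      = (a * ∑ j, (α j : K)) • monomial α 1
        + ∑ i : Fin (n + 1), (if h : (i : ℕ) < n then
            (α i : K) • monomial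
              (α - Finsupp.single i 1 + Finsupp.single ⟨(i : ℕ) + 1, by omega⟩ 1) 1
          else 0) := by
  rw [jordan_apply]
  have key : ∀ i : Fin (n + 1),
      (if h : (i : ℕ) < n then a • X i + X ⟨(i : ℕ) + 1, by omega⟩
       else a • X i) * pderiv i (monomial α (1 : K))
      = (a * (α i : K)) • monomial α 1
        + (if h : (i : ℕ) < n then
            (α i : K) • monomial
              (α - Finsupp.single i 1 + Finsupp.single ⟨(i : ℕ) + 1, by omega⟩ 1) 1
          else 0) := by
    intro i
    rw [pderiv_monomial, one_mul]
    split_ifs with h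
    · rw [add_mul, smul_mul_assoc, X_mul_pd, X_mul_pd', smul_smul]
    · rw [smul_mul_assoc, X_mul_pd, smul_smul, add_zero]
  rw [Finset.sum_congr rfl fun i _ => key i, Finset.sum_add_distrib]
  congr 1
  rw [Finset.mul_sum, ← Finset.sum_smul]

private lemma monomial_mem (n : ℕ) (a : K) [CharZero K] (ha : a ≠ 0) :
    ∀ (m : ℕ) (α : Fin (n + 1) →₀ ℕ),
      (∑ j, α j) * n - (∑ j, α j * (j : ℕ)) = m → α ≠ 0 →
      monomial α 1 ∈ LinearMap.range (jordanDerivation (K := K) n a) := by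
  intro m
  induction m using Nat.strong_induction_on with
  | _ m IH =>
    intro α hm hα
    set M := LinearMap.range (jordanDerivation (K := K) n a) with hM
    have hd : 0 < ∑ j, α j := by
      rcases Finsupp.ne_iff.mp hα with ⟨j, hj⟩
      refine Finset.sum_pos' (fun _ _ => Nat.zero_le _)
        ⟨j, Finset.mem_univ j, Nat.pos_of_ne_zero (by simpa using hj)⟩
    have hcast : (∑ j, (α j : K)) = ((∑ j, α j : ℕ) : K) := by push_cast; ring
    have hcoef : (a * ∑ j, (α j : K)) ≠ 0 := by
      refine mul_ne_zero ha ?_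
      rw [hcast]
      exact_mod_cast hd.ne'
    have hcorr : ∀ i : Fin (n + 1),
        (if h : (i : ℕ) < n then
            (α i : K) • monomial
              (α - Finsupp.single i 1 + Finsupp.single ⟨(i : ℕ) + 1, by omega⟩ 1) 1
          else 0) ∈ M := by
      intro i
      split_ifs with h
      · rcases Nat.eq_zero_or_pos (α i) with h0 | h0
        · simp [h0]
        · apply Submodule.smul_mem
          set i' : Fin (n + 1) := ⟨(i : ℕ) + 1, by omega⟩ with hi'
          set σ := α - Finsupp.single i 1 + Finsupp.single i' 1 with hσdef
          have hle : Finsupp.single i 1 ≤ α := by rwa [Finsupp.single_le_iff]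
          have hkey : σ + Finsupp.single i 1 = α + Finsupp.single i' 1 := by
            rw [hσdef, add_right_comm, tsub_add_cancel_of_le hle]
          have hfun : ∀ j, σ j + (Finsupp.single i 1) j
              = α j + (Finsupp.single i' 1) j := fun j => by
            rw [← Finsupp.add_apply, ← Finsupp.add_apply, hkey]
          have hs1 : ∑ j : Fin (n + 1), (Finsupp.single i 1) j = 1 := by
            simp [Finsupp.single_apply]
          have hs1' : ∑ j : Fin (n + 1), (Finsupp.single i' 1) j = 1 := by
            simp [Finsupp.single_apply]
          have hw1 : ∑ j : Fin (n + 1), (Finsupp.single i 1) j * (j : ℕ) = (i : ℕ) := by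
            simp [Finsupp.single_apply, ite_mul]
          have hw1' : ∑ j : Fin (n + 1), (Finsupp.single i' 1) j * (j : ℕ) = (i : ℕ) + 1 := by
            simp [Finsupp.single_apply, ite_mul, hi']
          have hdeg : (∑ j, σ j) = ∑ j, α j := by
            have h1 : (∑ j, (σ j + (Finsupp.single i 1) j))
                = ∑ j, (α j + (Finsupp.single i' 1) j) :=
              Finset.sum_congr rfl fun j _ => hfun j
            rw [Finset.sum_add_distrib, Finset.sum_add_distrib, hs1, hs1'] at h1
            omega
          have hw : (∑ j, σ j * (j : ℕ)) = (∑ j, α j * (j : ℕ)) + 1 := by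
            have h1 : (∑ j, (σ j + (Finsupp.single i 1) j) * (j : ℕ))
                = ∑ j, (α j + (Finsupp.single i' 1) j) * (j : ℕ) :=
              Finset.sum_congr rfl fun j _ => by rw [hfun]
            simp only [add_mul] at h1
            rw [Finset.sum_add_distrib, Finset.sum_add_distrib, hw1, hw1'] at h1
            omega
          have hwle : (∑ j, σ j * (j : ℕ)) ≤ (∑ j, σ j) * n := by
            calc (∑ j, σ j * (j : ℕ)) ≤ ∑ j, σ j * n :=
                  Finset.sum_le_sum fun j _ =>
                    Nat.mul_le_mul_left _ (Nat.lt_succ_iff.mp j.isLt)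
              _ = (∑ j, σ j) * n := (Finset.sum_mul _ _ _).symm
          have hσne : σ ≠ 0 := by
            intro h0
            rw [h0] at hdeg
            simp only [Finsupp.coe_zero, Pi.zero_apply, Finset.sum_const_zero] at hdeg
            omega
          have hlt : (∑ j, σ j) * n - (∑ j, σ j * (j : ℕ)) < m := by
            rw [hdeg, hw]
            rw [hw, hdeg] at hwle
            omega
          exact IH ((∑ j, σ j) * n - ∑ j, σ j * (j : ℕ)) hlt σ rfl hσne
      · exact Submodule.zero_mem M
    have hD : jordanDerivation (K := K) n a (monomial α 1) ∈ M := ⟨_, rfl⟩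
    rw [jordan_monomial] at hD
    have hsum : (∑ i : Fin (n + 1), (if h : (i : ℕ) < n then
        (α i : K) • monomial
          (α - Finsupp.single i 1 + Finsupp.single ⟨(i : ℕ) + 1, by omega⟩ 1) 1
        else 0)) ∈ M := Submodule.sum_mem M fun i _ => hcorr i
    have hs : (a * ∑ j, (α j : K)) • monomial α (1 : K) ∈ M := by
      have h2 := sub_mem hD hsum
      simpa using h2
    have h3 := Submodule.smul_mem M (a * ∑ j, (α j : K))⁻¹ hs
    rwa [smul_smul, inv_mul_cancel₀ hcoef, one_smul] at h3

end Aux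

theorem image_of_jordan_derivation_eq_maximal_ideal
    {K : Type*} [Field K] [CharZero K] (n : ℕ) (a : K) (ha : a ≠ 0) :
    LinearMap.range (jordanDerivation (K := K) n a)
      = Submodule.restrictScalars K
          (Ideal.span (Set.range (X : Fin (n + 1) → MvPolynomial (Fin (n + 1)) K))) := by
  apply le_antisymm
  · rintro q ⟨p, rfl⟩
    rw [Submodule.restrictScalars_mem, jordan_apply]
    apply Ideal.sum_mem
    intro i _
    apply Ideal.mul_mem_right
    have hx : ∀ j : Fin (n + 1), (a • X j : MvPolynomial (Fin (n + 1)) K)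
        ∈ Ideal.span (Set.range (X : Fin (n + 1) → MvPolynomial (Fin (n + 1)) K)) := by
      intro j
      rw [smul_eq_C_mul]
      exact Ideal.mul_mem_left _ _ (Ideal.subset_span ⟨j, rfl⟩)
    split_ifs with h
    · exact Ideal.add_mem _ (hx i) (Ideal.subset_span ⟨_, rfl⟩)
    · exact hx i
  · intro p hp
    rw [Submodule.restrictScalars_mem, ← Set.image_univ, mem_ideal_span_X_image] at hp
    rw [p.as_sum]
    apply Submodule.sum_mem
    intro α hα
    obtain ⟨i, -, hi⟩ := hp α hα
    have hαne : α ≠ 0 := fun h => hi (by simp [h])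
    have hmono : monomial α (coeff α p) = (coeff α p) • monomial α (1 : K) := by
      rw [smul_monomial, smul_eq_mul, mul_one]
    rw [hmono]
    exact Submodule.smul_mem _ _ (monomial_mem n a ha _ α rfl hαne)
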